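/- arXiv:2112.13020 — 5 statements merged into one kernel-verified Lean document; each statement's English description precedes it below -/
import Mathlib

section
/- Fix an integer N ≥ 1 and a confidence probability β ∈ (0,1). Suppose λ* : Ω^N → ℝ is a function satisfying λ*(ω) ≥ max_{1 ≤ i ≤ N} sol(ωᵢ) for every ω ∈ Ω^N (the specification threshold is chosen after observing the samples so that all N sampled instantiations satisfy the specification), and suppose the set { ω ∈ Ω^N : μ{ u ∈ Ω : sol(u) ≤ λ*(ω) } ≥ (1−β)^{1/N} } is μ^N-measurable. Then the μ^N-measure of this set is at least β. (Theorem 1: with confidence at least β, the satisfaction probability of the specification with sample-dependent threshold λ*(U_N) is at least (1−β)^{1/N}.) -/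
/-!
If every sample satisfies `sol (ωᵢ) ≤ λ*(ω)` but the satisfaction probability
`F(λ*(ω)) = μ {sol ≤ λ*(ω)}` is below `ε = (1-β)^(1/N)`, then every sample lies in the bad set
`B = {v | F(sol v) < ε}`. By the probability integral transform `μ B ≤ ε`, so the failure event
has `μ^N`-measure at most `ε^N = 1 - β`.
-/

open MeasureTheory Set
open scoped ENNReal

lemma isLowerSet_setOf_measure_Iic_lt {α : Type*} [Preorder α] [MeasurableSpace α]
    (ν : Measure α) (c : ℝ≥0∞) :
    IsLowerSet {t | ν (Iic t) < c} :=
  fun _ _ hts hs => (measure_mono (Iic_subset_Iic.2 hts)).trans_lt hs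

section

variable {α : Type*} [LinearOrder α] [TopologicalSpace α] [OrderClosedTopology α]
  [MeasurableSpace α] [OpensMeasurableSpace α]

lemma IsLowerSet.measure_le_of_forall_measure_Iic_le {ν : Measure α} [ν.InnerRegular]
    {S : Set α} (hS : IsLowerSet S) {c : ℝ≥0∞} (h : ∀ t ∈ S, ν (Iic t) ≤ c) : ν S ≤ c := by
  rw [hS.ordConnected.measurableSet.measure_eq_iSup_isCompact]
  refine iSup₂_le fun K hKS => iSup_le fun hK => ?_
  rcases K.eq_empty_or_nonempty with rfl | hK₀
  · simp
  obtain ⟨t, htK, htmax⟩ := hK.exists_isGreatest hK₀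
  exact (measure_mono htmax).trans (h t (hKS htK))

theorem measure_setOf_measure_Iic_lt_le (ν : Measure α) [ν.InnerRegular] (c : ℝ≥0∞) :
    ν {t | ν (Iic t) < c} ≤ c :=
  (isLowerSet_setOf_measure_Iic_lt ν c).measure_le_of_forall_measure_Iic_le fun _ ht => ht.le

end

/-- The probability integral transform: `F ∘ f` is stochastically no smaller than a uniform
variable, where `F` is the distribution function of `f`. -/
theorem measure_setOf_measure_le_lt_le {Ω : Type*} [MeasurableSpace Ω] (μ : Measure Ω)
    [IsFiniteMeasure μ] {f : Ω → ℝ} (hf : Measurable f) (c : ℝ≥0∞) :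
    μ {v | μ {u | f u ≤ f v} < c} ≤ c := by
  have h := measure_setOf_measure_Iic_lt_le (μ.map f) c
  rw [Measure.map_apply hf (isLowerSet_setOf_measure_Iic_lt _ c).ordConnected.measurableSet] at h
  simp only [Measure.map_apply hf measurableSet_Iic] at h
  exact h

/-- **Theorem 1 (scenario bound with sample-dependent threshold).**
With confidence at least `β`, the satisfaction probability of the specification
with sample-dependent threshold `λ*(U_N)` is at least `(1-β)^(1/N)`. -/
theorem scenario_variable_threshold
    {Ω : Type*} [MeasurableSpace Ω] (μ : Measure Ω) [IsProbabilityMeasure μ]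
    (sol : Ω → ℝ) (hsol : Measurable sol)
    (N : ℕ) (hN : 1 ≤ N) (β : ℝ) (hβ : β ∈ Set.Ioo (0 : ℝ) 1)
    (lam : (Fin N → Ω) → ℝ)
    (hlam : ∀ ω : Fin N → Ω, ∀ i : Fin N, sol (ω i) ≤ lam ω)
    (hmeas : MeasurableSet {ω : Fin N → Ω |
      (1 - β) ^ ((1 : ℝ) / N) ≤ (μ {u : Ω | sol u ≤ lam ω}).toReal}) :
    ENNReal.ofReal β ≤
      (Measure.pi (fun _ : Fin N => μ))
        {ω : Fin N → Ω |
          (1 - β) ^ ((1 : ℝ) / N) ≤ (μ {u : Ω | sol u ≤ lam ω}).toReal} := by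
  obtain ⟨-, hβ1⟩ := hβ
  have hεN : ((1 - β) ^ ((1 : ℝ) / N)) ^ N = 1 - β := by
    rw [one_div]; exact Real.rpow_inv_natCast_pow (by linarith) (by omega)
  set ε := (1 - β) ^ ((1 : ℝ) / N)
  set G := {ω : Fin N → Ω | ε ≤ (μ {u : Ω | sol u ≤ lam ω}).toReal}
  set B := {v : Ω | μ {u | sol u ≤ sol v} < ENNReal.ofReal ε}
  have hGc : Gᶜ ⊆ univ.pi fun _ => B := fun ω hω i _ =>
    (measure_mono fun u hu => hu.trans (hlam ω i)).trans_lt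
      ((ENNReal.lt_ofReal_iff_toReal_lt (measure_ne_top _ _)).2 (not_le.1 hω))
  have hGc_le : Measure.pi (fun _ => μ) Gᶜ ≤ ENNReal.ofReal (1 - β) := calc
    _ ≤ Measure.pi (fun _ => μ) (univ.pi fun _ => B) := measure_mono hGc
    _ = μ B ^ N := by simp [Measure.pi_pi]
    _ ≤ ENNReal.ofReal ε ^ N := by gcongr; exact measure_setOf_measure_le_lt_le μ hsol _
    _ = ENNReal.ofReal (1 - β) := by
        rw [← ENNReal.ofReal_pow (Real.rpow_nonneg (by linarith) _), hεN]
  calc ENNReal.ofReal β = 1 - ENNReal.ofReal (1 - β) := by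
        rw [← ENNReal.ofReal_one, ← ENNReal.ofReal_sub _ (by linarith), sub_sub_cancel]
    _ ≤ 1 - Measure.pi (fun _ => μ) Gᶜ := tsub_le_tsub_left hGc_le 1
    _ = Measure.pi (fun _ => μ) G := by
        rw [prob_compl_eq_one_sub hmeas, ENNReal.sub_sub_cancel ENNReal.one_ne_top prob_le_one]
end

section
/- Fix an integer N ≥ 1 and a confidence probability β ∈ (0,1). For ω ∈ Ω^N let τ*(ω) = max_{1 ≤ i ≤ N} sol(ωᵢ) (the optimal value of the scenario program min τ subject to sol(ωᵢ) ≤ τ for all i). Then μ^N{ ω ∈ Ω^N : μ{ u ∈ Ω : sol(u) ≤ τ*(ω) } ≥ (1−β)^{1/N} } ≥ β. (Lemma 1: with confidence at least β, a fresh sample u satisfies sol(u) ≤ τ* with probability at least (1−β)^{1/N}.) -/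
/-!
Write `F t = μ {sol ≤ t}`. The bad event `F (τ*) < ε` forces `F (sol ωᵢ) < ε` for every sample,
since `τ* ≥ sol ωᵢ` and `F` is monotone. A single sample has `F (sol u) < ε` with probability at
most `ε` (the distribution function evaluated at its own random variable is stochastically at
least uniform), so by independence the bad event has probability at most `ε ^ N = 1 - β` for
`ε = (1 - β) ^ (1 / N)`.
-/

open MeasureTheory Set
open scoped ENNReal

namespace MeasureTheory

variable {Ω : Type*} [MeasurableSpace Ω] (μ : Measure Ω)

theorem measure_preimage_le_of_isLowerSet {S : Set ℝ} (hS : IsLowerSet S) (f : Ω → ℝ)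
    {c : ℝ≥0∞} (h : ∀ t ∈ S, μ (f ⁻¹' Iic t) ≤ c) : μ (f ⁻¹' S) ≤ c := by
  by_cases hmax : ∃ t₀ ∈ S, ∀ s ∈ S, s ≤ t₀
  · obtain ⟨t₀, ht₀, hle⟩ := hmax
    exact (measure_mono fun x (hx : f x ∈ S) => hle _ hx).trans (h t₀ ht₀)
  push Not at hmax
  -- Without a greatest element, `S` is exhausted by its rational points.
  have hunion : f ⁻¹' S = ⋃ q : {q : ℚ // (q : ℝ) ∈ S}, f ⁻¹' Iic (q : ℝ) := by
    ext x
    simp only [mem_preimage, mem_iUnion, mem_Iic, Subtype.exists, exists_prop]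
    constructor
    · intro hx
      obtain ⟨s, hs, hxs⟩ := hmax _ hx
      obtain ⟨q, hxq, hqs⟩ := exists_rat_btwn hxs
      exact ⟨q, hS hqs.le hs, hxq.le⟩
    · rintro ⟨q, hq, hxq⟩
      exact hS hxq hq
  have hmono : Monotone fun q : {q : ℚ // (q : ℝ) ∈ S} => f ⁻¹' Iic (q : ℝ) :=
    fun p q hpq => preimage_mono (Iic_subset_Iic.2 (Rat.cast_le.2 hpq))
  rw [hunion, hmono.directed_le.measure_iUnion]
  exact iSup_le fun q => h q q.2

theorem measure_distribution_lt_le (f : Ω → ℝ) (c : ℝ≥0∞) :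
    μ {u | μ {v | f v ≤ f u} < c} ≤ c :=
  measure_preimage_le_of_isLowerSet μ (S := {t | μ (f ⁻¹' Iic t) < c})
    (fun _ _ hst ht => (measure_mono fun _ hv => hv.trans hst).trans_lt ht) f
    fun _ ht => ht.le

theorem one_sub_le_prob_of_prob_compl_le [IsProbabilityMeasure μ] {s : Set Ω} {q : ℝ≥0∞}
    (h : μ sᶜ ≤ q) : 1 - q ≤ μ s := by
  refine tsub_le_iff_right.2 ?_
  calc 1 = μ univ := measure_univ.symm
    _ ≤ μ s + μ sᶜ := measure_univ_le_add_compl s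
    _ ≤ μ s + q := add_le_add_right h _

end MeasureTheory

theorem scenario_opt_bound_general
    {Ω : Type*} [MeasurableSpace Ω] (μ : Measure Ω) [IsProbabilityMeasure μ]
    (sol : Ω → ℝ)
    (N : ℕ) (hN : 1 ≤ N) (β : ℝ) (hβ : β ∈ Set.Ioo (0 : ℝ) 1) :
    ENNReal.ofReal β ≤
      (Measure.pi (fun _ : Fin N => μ))
        {ω : Fin N → Ω |
          (1 - β) ^ ((1 : ℝ) / N) ≤
            (μ {u : Ω | sol u ≤
              Finset.univ.sup' (Finset.univ_nonempty_iff.mpr ⟨⟨0, hN⟩⟩)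
                (fun i : Fin N => sol (ω i))}).toReal} := by
  obtain ⟨hβ₀, hβ₁⟩ := hβ
  set ε := (1 - β) ^ ((1 : ℝ) / N)
  have hεN : ε ^ N = 1 - β := by
    simp only [ε, one_div]; exact Real.rpow_inv_natCast_pow (by linarith) (by omega)
  set A := {u | μ {v | sol v ≤ sol u} < ENNReal.ofReal ε}
  set G := {ω : Fin N → Ω | ε ≤ (μ {u | sol u ≤ Finset.univ.sup'
    (Finset.univ_nonempty_iff.mpr ⟨⟨0, hN⟩⟩) fun i => sol (ω i)}).toReal}
  have hbad : Gᶜ ⊆ univ.pi fun _ => A := by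
    intro ω hω i _
    have hlt := (ENNReal.lt_ofReal_iff_toReal_lt (measure_ne_top _ _)).2 (not_le.1 hω)
    exact (measure_mono fun v (hv : sol v ≤ sol (ω i)) =>
      hv.trans (Finset.le_sup' (fun i => sol (ω i)) (Finset.mem_univ i))).trans_lt hlt
  have hbad_le : Measure.pi (fun _ : Fin N => μ) Gᶜ ≤ ENNReal.ofReal (1 - β) :=
    calc _ ≤ Measure.pi (fun _ : Fin N => μ) (univ.pi fun _ => A) := measure_mono hbad
      _ = μ A ^ N := by
        simp only [Measure.pi_pi, Finset.prod_const, Finset.card_univ, Fintype.card_fin]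
      _ ≤ ENNReal.ofReal ε ^ N := by gcongr; exact measure_distribution_lt_le μ sol _
      _ = ENNReal.ofReal (1 - β) := by rw [← ENNReal.ofReal_pow (by positivity), hεN]
  calc ENNReal.ofReal β = 1 - ENNReal.ofReal (1 - β) := by
        rw [← ENNReal.ofReal_one, ← ENNReal.ofReal_sub _ (by linarith : 0 ≤ 1 - β), sub_sub_cancel]
    _ ≤ Measure.pi (fun _ : Fin N => μ) G := one_sub_le_prob_of_prob_compl_le _ hbad_le

/-- **Lemma 1.** With confidence at least `β`, a fresh sample `u` satisfies
`sol u ≤ τ*` with probability at least `(1-β)^(1/N)`, where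
`τ*(ω) = max_{1 ≤ i ≤ N} sol (ωᵢ)` is the optimal value of the scenario program. -/
theorem scenario_opt_bound
    {Ω : Type*} [MeasurableSpace Ω] (μ : Measure Ω) [IsProbabilityMeasure μ]
    (sol : Ω → ℝ) (hsol : Measurable sol)
    (N : ℕ) (hN : 1 ≤ N) (β : ℝ) (hβ : β ∈ Set.Ioo (0 : ℝ) 1) :
    ENNReal.ofReal β ≤
      (Measure.pi (fun _ : Fin N => μ))
        {ω : Fin N → Ω |
          (1 - β) ^ ((1 : ℝ) / N) ≤
            (μ {u : Ω | sol u ≤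
              Finset.univ.sup' (Finset.univ_nonempty_iff.mpr ⟨⟨0, hN⟩⟩)
                (fun i : Fin N => sol (ω i))}).toReal} :=
  scenario_opt_bound_general μ sol N hN β hβ
end

section
/- Fix an integer N ≥ 1, a confidence probability β ∈ (0,1), a threshold λ ∈ ℝ, and numbers t*(k) as in the context. For ω ∈ Ω^N let N_viol(ω) = #{ i ∈ {1,…,N} : sol(ωᵢ) > λ } be the number of samples violating the specification. Then μ^N{ ω ∈ Ω^N : μ{ u ∈ Ω : sol(u) ≤ λ } ≥ t*(N_viol(ω)) } ≥ β. (Theorem 2: with confidence at least β, the satisfaction probability of the specification with fixed threshold λ is at least t*(N_viol).) -/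
/-!
The satisfaction probability `p = μ {sol ≤ λ}` is a fixed number, and the number of violating
samples is binomially distributed: `μ^N {N_viol = k} = C(N,k) (1 - p)^k p^(N-k)`. The bad event
`p < t*(N_viol)` forces `N_viol < N` (as `t*(N) = 0`), and on `{N_viol = k}` with `p < t*(k)` its
probability is at most the binomial CDF `F_k(p) ≤ F_k(t*(k)) = (1 - β)/N`, because `F_k` is
increasing on `[0,1]`. Summing over the at most `N` values of `k` bounds the bad event by `1 - β`.
-/

open MeasureTheory

/-- The probability of at most `k` failures in `N` independent trials that each succeed with
probability `t`. -/
noncomputable def binomialCDF (N k : ℕ) (t : ℝ) : ℝ :=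
  ∑ i ∈ Finset.range (k + 1), (N.choose i : ℝ) * (1 - t) ^ i * t ^ (N - i)

/-- The derivatives of the summands telescope, thanks to `C(N, k+1) (k+1) = C(N, k) (N-k)`. -/
theorem hasDerivAt_binomialCDF (N k : ℕ) (t : ℝ) :
    HasDerivAt (binomialCDF N k)
      (N.choose k * (N - k : ℕ) * (1 - t) ^ k * t ^ (N - k - 1)) t := by
  induction k with
  | zero =>
    have h0 : binomialCDF N 0 = fun t => t ^ N := by funext t; simp [binomialCDF]
    simpa [h0] using hasDerivAt_pow N t
  | succ k ih =>
    have hterm : HasDerivAt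
        (fun t : ℝ => (N.choose (k + 1) : ℝ) * (1 - t) ^ (k + 1) * t ^ (N - (k + 1)))
        (N.choose (k + 1) * ((k + 1) * (1 - t) ^ k * (-1)) * t ^ (N - (k + 1)) +
          N.choose (k + 1) * (1 - t) ^ (k + 1) *
            ((N - (k + 1) : ℕ) * t ^ (N - (k + 1) - 1))) t := by
      simpa using (((hasDerivAt_const t (1 : ℝ)).sub (hasDerivAt_id' t)).fun_pow (k + 1)).const_mul
        (N.choose (k + 1) : ℝ) |>.fun_mul (hasDerivAt_pow (N - (k + 1)) t)
    have hsum : binomialCDF N (k + 1) = fun t => binomialCDF N k t +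
        (N.choose (k + 1) : ℝ) * (1 - t) ^ (k + 1) * t ^ (N - (k + 1)) := by
      funext t; exact Finset.sum_range_succ _ _
    rw [hsum]
    refine (ih.add hterm).congr_deriv ?_
    rcases lt_or_ge k N with hk | hk
    · obtain ⟨a, rfl⟩ := Nat.exists_eq_add_of_lt hk
      have hchoose : ((k + a + 1).choose (k + 1) : ℝ) * (k + 1) =
          ((k + a + 1).choose k) * (a + 1) := by
        exact_mod_cast (show k + a + 1 - k = a + 1 by omega) ▸
          Nat.choose_succ_right_eq (k + a + 1) k
      rw [show k + a + 1 - k = a + 1 by omega, show k + a + 1 - (k + 1) = a by omega,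
        Nat.add_sub_cancel]
      push_cast
      linear_combination (-(1 - t) ^ k * t ^ a) * hchoose
    · simp [Nat.choose_eq_zero_of_lt (Nat.lt_succ_of_le hk), Nat.sub_eq_zero_of_le hk]

theorem monotoneOn_binomialCDF (N k : ℕ) : MonotoneOn (binomialCDF N k) (Set.Icc 0 1) := by
  have hdiff : Differentiable ℝ (binomialCDF N k) := fun t =>
    (hasDerivAt_binomialCDF N k t).differentiableAt
  refine monotoneOn_of_deriv_nonneg (convex_Icc 0 1) hdiff.continuous.continuousOn
    hdiff.differentiableOn fun t ht => ?_
  rw [interior_Icc] at ht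
  rw [(hasDerivAt_binomialCDF N k t).deriv]
  have h1t : 0 ≤ 1 - t := by linarith [ht.2]
  have ht0 : 0 ≤ t := ht.1.le
  positivity

theorem binomial_term_le_binomialCDF (N k : ℕ) {t : ℝ} (ht : t ∈ Set.Icc (0 : ℝ) 1) :
    (N.choose k : ℝ) * (1 - t) ^ k * t ^ (N - k) ≤ binomialCDF N k t := by
  have h1t : 0 ≤ 1 - t := by linarith [ht.2]
  exact Finset.single_le_sum (f := fun i => (N.choose i : ℝ) * (1 - t) ^ i * t ^ (N - i))
    (fun i _ => by have := ht.1; positivity) (Finset.self_mem_range_succ k)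

section IidCount

variable {Ω ι : Type*} [Fintype ι] [DecidableEq ι] (P : Ω → Prop) [DecidablePred P]

theorem setOf_filter_eq_pi (s : Finset ι) :
    {ω : ι → Ω | Finset.univ.filter (fun i => P (ω i)) = s} =
      Set.univ.pi fun i => if i ∈ s then {u | P u} else {u | ¬ P u} := by
  ext ω
  simp only [Set.mem_ofPred_eq, Finset.ext_iff, Finset.mem_filter, Finset.mem_univ, true_and,
    Set.mem_pi, Set.mem_univ, forall_const]
  refine forall_congr' fun i => ?_
  by_cases hi : i ∈ s <;> simp [hi]

theorem measure_pi_card_filter_eq [MeasurableSpace Ω] (μ : Measure Ω) [SigmaFinite μ]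
    (hP : MeasurableSet {u | P u}) (k : ℕ) :
    Measure.pi (fun _ : ι => μ) {ω | (Finset.univ.filter fun i => P (ω i)).card = k} =
      (Fintype.card ι).choose k * μ {u | P u} ^ k * μ {u | ¬ P u} ^ (Fintype.card ι - k) := by
  have hunion : {ω : ι → Ω | (Finset.univ.filter fun i => P (ω i)).card = k} =
      ⋃ s ∈ Finset.powersetCard k Finset.univ,
        {ω : ι → Ω | Finset.univ.filter (fun i => P (ω i)) = s} := by
    ext ω; simp
  have hfiber : ∀ s ∈ Finset.powersetCard k (Finset.univ : Finset ι),
      Measure.pi (fun _ : ι => μ) {ω | Finset.univ.filter (fun i => P (ω i)) = s} =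
        μ {u | P u} ^ k * μ {u | ¬ P u} ^ (Fintype.card ι - k) := by
    intro s hs
    rw [Finset.mem_powersetCard] at hs
    rw [setOf_filter_eq_pi, Measure.pi_pi, ← Finset.prod_mul_prod_compl s,
      Finset.prod_eq_pow_card (b := μ {u | P u}) fun i hi => by rw [if_pos hi],
      Finset.prod_eq_pow_card (b := μ {u | ¬ P u}) fun i hi => by
        rw [if_neg (Finset.mem_compl.mp hi)],
      Finset.card_compl, hs.2]
  rw [hunion, measure_biUnion_finset, Finset.sum_congr rfl hfiber, Finset.sum_const,
    Finset.card_powersetCard, Finset.card_univ, nsmul_eq_mul, mul_assoc]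
  · exact fun s _ t _ hst => Set.disjoint_left.mpr fun ω hs ht => hst (hs.symm.trans ht)
  · intro s _
    rw [setOf_filter_eq_pi]
    exact MeasurableSet.univ_pi fun i => by split_ifs; exacts [hP, hP.compl]

end IidCount

theorem ofReal_le_measure_of_measureReal_compl_le {α : Type*} [MeasurableSpace α]
    {π : Measure α} [IsProbabilityMeasure π] {s : Set α} {b : ℝ} (h : π.real sᶜ ≤ 1 - b) :
    ENNReal.ofReal b ≤ π s := by
  refine ENNReal.ofReal_le_of_le_toReal ?_
  have hcover : π.real Set.univ ≤ π.real s + π.real sᶜ :=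
    Set.union_compl_self s ▸ measureReal_union_le _ _
  rw [probReal_univ] at hcover
  rw [← measureReal_def]
  linarith

theorem ofReal_le_measure_setOf_le_of_binomial {α : Type*} [MeasurableSpace α] {π : Measure α}
    [IsProbabilityMeasure π] {X : α → ℕ} {N : ℕ} (hX : ∀ ω, X ω ≤ N) {p : ℝ}
    (hp : p ∈ Set.Icc (0 : ℝ) 1)
    (hlaw : ∀ k, π.real {ω | X ω = k} = N.choose k * (1 - p) ^ k * p ^ (N - k))
    {β : ℝ} (hβ : β ≤ 1) {t : ℕ → ℝ} (ht_mem : ∀ k < N, t k ∈ Set.Icc (0 : ℝ) 1)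
    (ht_eq : ∀ k < N, binomialCDF N k (t k) = (1 - β) / N) (htN : t N ≤ p) :
    ENNReal.ofReal β ≤ π {ω | t (X ω) ≤ p} := by
  have hbad : {ω | t (X ω) ≤ p}ᶜ ⊆ ⋃ k ∈ (Finset.range N).filter (p < t ·), {ω | X ω = k} := by
    intro ω hω
    have hω : p < t (X ω) := not_le.mp hω
    have hXN : X ω < N := (hX ω).lt_of_ne fun h => (h ▸ hω).not_ge htN
    simp [hXN, hω]
  have hterm : ∀ k ∈ (Finset.range N).filter (p < t ·), π.real {ω | X ω = k} ≤ (1 - β) / N := by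
    intro k hk
    rw [Finset.mem_filter, Finset.mem_range] at hk
    calc π.real {ω | X ω = k} ≤ binomialCDF N k p := hlaw k ▸ binomial_term_le_binomialCDF N k hp
      _ ≤ binomialCDF N k (t k) := monotoneOn_binomialCDF N k hp (ht_mem k hk.1) hk.2.le
      _ = (1 - β) / N := ht_eq k hk.1
  have hβN : 0 ≤ (1 - β) / N := div_nonneg (by linarith) N.cast_nonneg
  refine ofReal_le_measure_of_measureReal_compl_le ?_
  calc π.real {ω | t (X ω) ≤ p}ᶜ
      ≤ ∑ k ∈ (Finset.range N).filter (p < t ·), π.real {ω | X ω = k} :=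
        (measureReal_mono hbad (measure_ne_top _ _)).trans (measureReal_biUnion_finset_le _ _)
    _ ≤ ∑ _k ∈ Finset.range N, (1 - β) / N :=
        (Finset.sum_le_sum hterm).trans (Finset.sum_le_sum_of_subset_of_nonneg
          (Finset.filter_subset _ _) fun _ _ _ => hβN)
    _ ≤ 1 - β := by
        rw [Finset.sum_const, Finset.card_range, nsmul_eq_mul, mul_div_left_comm]
        exact mul_le_of_le_one_right (by linarith) (div_self_le_one _)

theorem scenario_fixed_threshold_general
    {Ω : Type*} [MeasurableSpace Ω] (μ : Measure Ω) [IsProbabilityMeasure μ]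
    (sol : Ω → ℝ) (hsol : Measurable sol)
    (N : ℕ) (β : ℝ) (hβ : β ∈ Set.Ioo (0 : ℝ) 1) (lam : ℝ)
    (tstar : ℕ → ℝ)
    (htstar_mem : ∀ k, k ≤ N - 1 → tstar k ∈ Set.Icc (0 : ℝ) 1)
    (htstar_eq : ∀ k, k ≤ N - 1 →
      ∑ i ∈ Finset.range (k + 1),
        (N.choose i : ℝ) * (1 - tstar k) ^ i * (tstar k) ^ (N - i) = (1 - β) / N)
    (htstar_N : tstar N = 0) :
    ENNReal.ofReal β ≤
      (Measure.pi (fun _ : Fin N => μ))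
        {ω : Fin N → Ω |
          tstar ((Finset.univ.filter (fun i : Fin N => lam < sol (ω i))).card) ≤
            (μ {u : Ω | sol u ≤ lam}).toReal} := by
  set p := μ.real {u : Ω | sol u ≤ lam} with hp_def
  have hp : p ∈ Set.Icc (0 : ℝ) 1 := ⟨measureReal_nonneg, measureReal_le_one⟩
  have hviol : μ.real {u | lam < sol u} = 1 - p := by
    rw [hp_def, ← probReal_compl_eq_one_sub (measurableSet_le hsol measurable_const),
      Set.compl_ofPred]
    simp_rw [not_le]
  have hsat : {u | ¬ lam < sol u} = {u | sol u ≤ lam} := by ext; simp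
  refine ofReal_le_measure_setOf_le_of_binomial
    (fun ω => (Finset.card_filter_le _ _).trans_eq (Finset.card_fin N)) hp (fun k => ?_)
    hβ.2.le (fun k hk => htstar_mem k (by omega)) (fun k hk => htstar_eq k (by omega))
    (htstar_N ▸ hp.1)
  rw [measureReal_def, measure_pi_card_filter_eq (fun u => lam < sol u) μ
    (measurableSet_lt measurable_const hsol), hsat, ENNReal.toReal_mul, ENNReal.toReal_mul,
    ENNReal.toReal_pow, ENNReal.toReal_pow, ← measureReal_def, ← measureReal_def, hviol,
    ← hp_def, ENNReal.toReal_natCast, Fintype.card_fin]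

/-- **Theorem 2.** With confidence at least `β`, the satisfaction probability of the
specification with fixed threshold `lam` is at least `t*(N_viol)`, where `N_viol` is the
number of violating samples. -/
theorem scenario_fixed_threshold
    {Ω : Type*} [MeasurableSpace Ω] (μ : Measure Ω) [IsProbabilityMeasure μ]
    (sol : Ω → ℝ) (hsol : Measurable sol)
    (N : ℕ) (hN : 1 ≤ N) (β : ℝ) (hβ : β ∈ Set.Ioo (0 : ℝ) 1) (lam : ℝ)
    (tstar : ℕ → ℝ)
    (htstar_mem : ∀ k, k ≤ N - 1 → tstar k ∈ Set.Icc (0 : ℝ) 1)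
    (htstar_eq : ∀ k, k ≤ N - 1 →
      ∑ i ∈ Finset.range (k + 1),
        (N.choose i : ℝ) * (1 - tstar k) ^ i * (tstar k) ^ (N - i) = (1 - β) / N)
    (htstar_N : tstar N = 0) :
    ENNReal.ofReal β ≤
      (Measure.pi (fun _ : Fin N => μ))
        {ω : Fin N → Ω |
          tstar ((Finset.univ.filter (fun i : Fin N => lam < sol (ω i))).card) ≤
            (μ {u : Ω | sol u ≤ lam}).toReal} :=
  scenario_fixed_threshold_general μ sol hsol N β hβ lam tstar htstar_mem htstar_eq htstar_N
end

section
/- Fix integers N ≥ 1 and 0 ≤ k ≤ N−1. For ω ∈ Ω^N let τ_k(ω) denote the (k+1)-th largest value among sol(ω₁), …, sol(ω_N), counted with multiplicity (i.e., the maximum after discarding the k largest sample values). Then for every t ∈ [0,1], μ^N{ ω ∈ Ω^N : μ{ u ∈ Ω : sol(u) ≤ τ_k(ω) } < t } ≤ Σ_{i=0}^{k} (N choose i)·(1−t)^i·t^{N−i}. (This is the scenario bound with k discarded constraints, specialized to one decision variable, underlying Lemma 2.) -/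
/-!
Write `F x = μ {sol ≤ x}` and `A = {u | F (sol u) < t}`. Since `A` is the preimage of a lower
set of reals on which `F < t`, continuity from below gives `μ A ≤ t`. If `F (τ_k ω) < t`, then
every sample with `sol ωᵢ ≤ τ_k ω`, and there are at least `N - k` of them, lies in `A`; so at
most `k` samples fall outside `A`. By independence (and a union bound over the set of those
samples) this has probability at most `∑_{j ≤ k} (N choose j) (1 - p)^j p^(N - j)` with
`p = μ A`, and this binomial tail is increasing in `p` on `[0, 1]`: its derivative telescopes to
`(k + 1) (N choose (k + 1)) (1 - p)^k p^(N - k - 1) ≥ 0`.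
-/

open MeasureTheory Finset
open scoped ENNReal

/-- The probability of at most `k` failures in `N` independent trials of success probability
`s`. -/
noncomputable def binomialTail (N k : ℕ) (s : ℝ) : ℝ :=
  ∑ j ∈ range (k + 1), (N.choose j : ℝ) * (1 - s) ^ j * s ^ (N - j)

lemma hasDerivAt_choose_mul_one_sub_pow_mul_pow (N j : ℕ) (s : ℝ) :
    HasDerivAt (fun s : ℝ => (N.choose j : ℝ) * (1 - s) ^ j * s ^ (N - j))
      ((j + 1) * (N.choose (j + 1) : ℝ) * (1 - s) ^ j * s ^ (N - (j + 1))
        - j * (N.choose j : ℝ) * (1 - s) ^ (j - 1) * s ^ (N - j)) s := by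
  have hchoose : (N.choose (j + 1) : ℝ) * (j + 1) = N.choose j * (N - j : ℕ) := by
    exact_mod_cast Nat.choose_succ_right_eq N j
  refine ((((hasDerivAt_id' s).const_sub 1).fun_pow j).const_mul (N.choose j : ℝ)).mul
    (hasDerivAt_pow (N - j) s) |>.congr_deriv ?_
  rw [show N - (j + 1) = N - j - 1 by omega]
  linear_combination -(1 - s) ^ j * s ^ (N - j - 1) * hchoose

lemma hasDerivAt_binomialTail (N k : ℕ) (s : ℝ) :
    HasDerivAt (binomialTail N k)
      ((k + 1) * (N.choose (k + 1) : ℝ) * (1 - s) ^ k * s ^ (N - (k + 1))) s := by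
  induction k with
  | zero =>
    have hzero : binomialTail N 0 = fun s => (N.choose 0 : ℝ) * (1 - s) ^ 0 * s ^ (N - 0) := by
      funext; simp [binomialTail]
    rw [hzero]
    exact (hasDerivAt_choose_mul_one_sub_pow_mul_pow N 0 s).congr_deriv (by simp)
  | succ k ih =>
    have hsucc : binomialTail N (k + 1) = binomialTail N k +
        fun s => (N.choose (k + 1) : ℝ) * (1 - s) ^ (k + 1) * s ^ (N - (k + 1)) := by
      funext; simp [binomialTail, sum_range_succ _ (k + 1)]
    rw [hsucc]
    refine (ih.add (hasDerivAt_choose_mul_one_sub_pow_mul_pow N (k + 1) s)).congr_deriv ?_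
    push_cast
    ring

lemma monotoneOn_binomialTail (N k : ℕ) : MonotoneOn (binomialTail N k) (Set.Icc 0 1) := by
  have hderiv := hasDerivAt_binomialTail N k
  have hdiff : Differentiable ℝ (binomialTail N k) := fun s => (hderiv s).differentiableAt
  refine monotoneOn_of_deriv_nonneg (convex_Icc 0 1) hdiff.continuous.continuousOn
    hdiff.differentiableOn fun s hs => ?_
  rw [interior_Icc] at hs
  have : 0 ≤ 1 - s := by linarith [hs.2]
  have : 0 ≤ s := hs.1.le
  rw [(hderiv s).deriv]
  positivity

section LowerSet
variable {Ω : Type*} [MeasurableSpace Ω] (μ : Measure Ω) (f : Ω → ℝ)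

lemma measure_preimage_le_of_isLowerSet {B : Set ℝ} (hB : IsLowerSet B) {c : ℝ≥0∞}
    (hc : ∀ x ∈ B, μ (f ⁻¹' Set.Iic x) ≤ c) : μ (f ⁻¹' B) ≤ c := by
  by_cases hmax : ∃ b ∈ B, ∀ x ∈ B, x ≤ b
  · obtain ⟨b, hbB, hb⟩ := hmax
    exact (measure_mono (Set.preimage_mono fun x hx => hb x hx)).trans (hc b hbB)
  · push Not at hmax
    -- without a greatest element, `B` is covered by the intervals `Iic q` at rationals `q ∈ B`
    have hcover : f ⁻¹' B ⊆ ⋃ q : {q : ℚ // (q : ℝ) ∈ B}, f ⁻¹' Set.Iic (q : ℝ) := by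
      intro u hu
      obtain ⟨y, hyB, hy⟩ := hmax _ hu
      obtain ⟨q, hfq, hqy⟩ := exists_rat_btwn hy
      exact Set.mem_iUnion.mpr ⟨⟨q, hB hqy.le hyB⟩, hfq.le⟩
    have hmono : Monotone fun q : {q : ℚ // (q : ℝ) ∈ B} => f ⁻¹' Set.Iic (q : ℝ) :=
      fun q r hqr => Set.preimage_mono (Set.Iic_subset_Iic.mpr (by exact_mod_cast hqr))
    calc μ (f ⁻¹' B) ≤ μ (⋃ q : {q : ℚ // (q : ℝ) ∈ B}, f ⁻¹' Set.Iic (q : ℝ)) :=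
          measure_mono hcover
      _ = ⨆ q : {q : ℚ // (q : ℝ) ∈ B}, μ (f ⁻¹' Set.Iic (q : ℝ)) := hmono.measure_iUnion
      _ ≤ c := iSup_le fun q => hc _ q.2

variable [IsFiniteMeasure μ]

lemma isLowerSet_setOf_measure_le_lt (t : ℝ) :
    IsLowerSet {x : ℝ | (μ {v | f v ≤ x}).toReal < t} := fun _ _ hxy hy =>
  (ENNReal.toReal_mono (measure_ne_top μ _) (measure_mono fun _ hv => le_trans hv hxy)).trans_lt hy

lemma measure_setOf_measure_le_lt_le_s7 (t : ℝ) :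
    μ {u | (μ {v | f v ≤ f u}).toReal < t} ≤ ENNReal.ofReal t :=
  measure_preimage_le_of_isLowerSet μ f (isLowerSet_setOf_measure_le_lt μ f t) fun x hx => by
    rw [← ENNReal.ofReal_toReal (measure_ne_top μ _)]
    exact ENNReal.ofReal_le_ofReal (le_of_lt hx)

end LowerSet

lemma Multiset.lt_countP_le_sort_getD {α : Type*} [LinearOrder α] (s : Multiset α) {m : ℕ}
    (hm : m < card s) (d : α) :
    m < s.countP (· ≤ (s.sort (· ≤ ·)).getD m d) := by
  set l := s.sort (· ≤ ·)
  have hml : m < l.length := by rwa [Multiset.length_sort]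
  have hsorted : l.Pairwise (· ≤ ·) := Multiset.pairwise_sort _ _
  have htake : ∀ x ∈ l.take (m + 1), x ≤ l.getD m d := by
    intro x hx
    obtain ⟨j, hj, rfl⟩ := List.mem_take_iff_getElem.mp hx
    rw [List.getD_eq_getElem _ _ hml]
    exact hsorted.rel_get_of_le (a := ⟨j, by omega⟩) (b := ⟨m, hml⟩)
      (Fin.mk_le_mk.mpr (by omega))
  calc m < (l.take (m + 1)).length := by rw [List.length_take]; omega
    _ = (l.take (m + 1)).countP (· ≤ l.getD m d) :=
          (List.countP_eq_length.mpr (by simpa using htake)).symm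
    _ ≤ l.countP (· ≤ l.getD m d) := (l.take_sublist _).countP_le
    _ = s.countP (· ≤ l.getD m d) := by rw [← Multiset.coe_countP, Multiset.sort_eq]

lemma card_sub_le_card_filter_le_sort_getD {ι α : Type*} [Fintype ι] [LinearOrder α]
    (x : ι → α) (k : ℕ) (d : α) :
    Fintype.card ι - k ≤
      #{i | x i ≤
        (((univ.val : Multiset ι).map x).sort (· ≤ ·)).getD (Fintype.card ι - 1 - k) d} := by
  have hcount : ∀ τ : α, #{i | x i ≤ τ} = ((univ.val : Multiset ι).map x).countP (· ≤ τ) := by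
    intro τ
    rw [Multiset.countP_map]
    rfl
  rw [hcount]
  rcases lt_or_ge k (Fintype.card ι) with hk | hk
  · have := ((univ.val : Multiset ι).map x).lt_countP_le_sort_getD
      (m := Fintype.card ι - 1 - k) (by simp only [Multiset.card_map, card_val, card_univ]; omega) d
    omega
  · omega

lemma card_filter_not_le_of_forall_le_sort_getD {ι α : Type*} [Fintype ι] [LinearOrder α]
    (x : ι → α) (k : ℕ) (d : α) (p : α → Prop) [DecidablePred p]
    (hp : ∀ a ≤ (((univ.val : Multiset ι).map x).sort (· ≤ ·)).getD (Fintype.card ι - 1 - k) d,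
      p a) :
    #{i | ¬p (x i)} ≤ k := by
  have hle := card_sub_le_card_filter_le_sort_getD x k d
  have hsub := card_le_card (monotone_filter_right univ fun i _ hi => hp (x i) hi)
  have hsplit := card_filter_add_card_filter_not (s := univ) fun i => p (x i)
  rw [card_univ] at hsplit
  omega

open Classical in
lemma setOf_measure_le_sort_getD_lt_subset {ι Ω : Type*} [Fintype ι] [MeasurableSpace Ω]
    (μ : Measure Ω) [IsFiniteMeasure μ] (f : Ω → ℝ) (k : ℕ) (t : ℝ) :
    {ω : ι → Ω | (μ {u | f u ≤
        (((univ.val : Multiset ι).map fun i => f (ω i)).sort (· ≤ ·)).getD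
          (Fintype.card ι - 1 - k) 0}).toReal < t} ⊆
      {ω | #{i | ω i ∉ {u | (μ {v | f v ≤ f u}).toReal < t}} ≤ k} := fun ω hω =>
  card_filter_not_le_of_forall_le_sort_getD (fun i => f (ω i)) k 0 _
    fun _ ha => isLowerSet_setOf_measure_le_lt μ f t ha hω

section Product
variable {ι Ω : Type*} [Fintype ι] [MeasurableSpace Ω] (μ : Measure Ω) [SigmaFinite μ]

lemma measure_pi_univ_pi_ite [DecidableEq ι] (S : Finset ι) (A B : Set Ω) :
    Measure.pi (fun _ : ι => μ) (Set.univ.pi fun i => if i ∈ S then B else A) =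
      μ B ^ #S * μ A ^ (Fintype.card ι - #S) := by
  rw [Measure.pi_pi]
  simp only [apply_ite μ]
  rw [prod_ite, prod_const, prod_const, filter_mem_eq_inter, univ_inter, filter_not,
    filter_mem_eq_inter, univ_inter, ← compl_eq_univ_sdiff, card_compl]

open Classical in
lemma measure_pi_setOf_card_not_mem_le (A : Set Ω) (k : ℕ) :
    Measure.pi (fun _ : ι => μ) {ω | #{i | ω i ∉ A} ≤ k} ≤
      ∑ j ∈ range (k + 1),
        ((Fintype.card ι).choose j : ℝ≥0∞) * μ Aᶜ ^ j * μ A ^ (Fintype.card ι - j) := by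
  set box : Finset ι → Set (ι → Ω) := fun S => Set.univ.pi fun i => if i ∈ S then Aᶜ else A
  have hcover : {ω : ι → Ω | #{i | ω i ∉ A} ≤ k} ⊆
      ⋃ j ∈ range (k + 1), ⋃ S ∈ powersetCard j univ, box S := by
    intro ω hω
    simp only [Set.mem_iUnion, mem_range, mem_powersetCard_univ]
    refine ⟨_, Nat.lt_succ_of_le hω, _, rfl, fun i _ => ?_⟩
    by_cases hi : ω i ∈ A <;> simp [hi]
  calc _ ≤ ∑ j ∈ range (k + 1), ∑ S ∈ powersetCard j univ, Measure.pi (fun _ : ι => μ) (box S) :=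
        (measure_mono hcover).trans <| (measure_biUnion_finset_le _ _).trans <|
          sum_le_sum fun j _ => measure_biUnion_finset_le _ _
    _ = _ := sum_congr rfl fun j _ => by
        rw [sum_congr rfl fun S hS => by rw [measure_pi_univ_pi_ite, (mem_powersetCard.mp hS).2],
          sum_const, card_powersetCard, card_univ, nsmul_eq_mul, mul_assoc]

end Product

lemma sum_choose_mul_measure_compl_pow_mul_measure_pow {Ω : Type*} [MeasurableSpace Ω]
    (μ : Measure Ω) [IsProbabilityMeasure μ] {A : Set Ω} (hA : MeasurableSet A) (N k : ℕ) :
    ∑ j ∈ range (k + 1), (N.choose j : ℝ≥0∞) * μ Aᶜ ^ j * μ A ^ (N - j) =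
      ENNReal.ofReal (binomialTail N k (μ.real A)) := by
  have hcompl : 0 ≤ 1 - μ.real A := sub_nonneg.mpr measureReal_le_one
  rw [binomialTail, ENNReal.ofReal_sum_of_nonneg fun j _ => by positivity]
  refine sum_congr rfl fun j _ => ?_
  rw [ENNReal.ofReal_mul (by positivity), ENNReal.ofReal_mul (by positivity),
    ENNReal.ofReal_natCast, ENNReal.ofReal_pow hcompl, ENNReal.ofReal_pow measureReal_nonneg,
    ← probReal_compl_eq_one_sub hA, ofReal_measureReal, ofReal_measureReal]

theorem scenario_discard_tail_bound_general
    {Ω : Type*} [MeasurableSpace Ω] (μ : Measure Ω) [IsProbabilityMeasure μ]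
    (sol : Ω → ℝ) (hsol : Measurable sol)
    (N : ℕ) (k : ℕ)
    (t : ℝ) (ht : t ∈ Set.Icc (0 : ℝ) 1) :
    (Measure.pi (fun _ : Fin N => μ))
        {ω : Fin N → Ω |
          (μ {u : Ω | sol u ≤
            (((Finset.univ.val : Multiset (Fin N)).map
                (fun i : Fin N => sol (ω i))).sort (· ≤ ·)).getD (N - 1 - k) 0}).toReal
            < t}
      ≤ ENNReal.ofReal
          (∑ i ∈ Finset.range (k + 1),
            (N.choose i : ℝ) * (1 - t) ^ i * t ^ (N - i)) := by
  set A := {u | (μ {v | sol v ≤ sol u}).toReal < t}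
  have hA : MeasurableSet A :=
    hsol (isLowerSet_setOf_measure_le_lt μ sol t).ordConnected.measurableSet
  have hμA : μ.real A ≤ t :=
    ENNReal.toReal_le_of_le_ofReal ht.1 (measure_setOf_measure_le_lt_le_s7 μ sol t)
  have hevent := setOf_measure_le_sort_getD_lt_subset (ι := Fin N) μ sol k t
  rw [Fintype.card_fin] at hevent
  calc _ ≤ _ := measure_mono hevent
    _ ≤ _ := measure_pi_setOf_card_not_mem_le μ A k
    _ = ENNReal.ofReal (binomialTail N k (μ.real A)) := by
      rw [Fintype.card_fin, sum_choose_mul_measure_compl_pow_mul_measure_pow μ hA]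
    _ ≤ _ := ENNReal.ofReal_le_ofReal <|
      monotoneOn_binomialTail N k ⟨measureReal_nonneg, hμA.trans ht.2⟩ ht hμA

/-- Scenario bound with `k` discarded constraints (one decision variable): letting
`τ_k(ω)` be the `(k+1)`-th largest value among `sol (ω₁), …, sol (ω_N)` counted with
multiplicity (i.e., entry `N-1-k` of the ascending sort), the probability that
`μ {u | sol u ≤ τ_k ω} < t` is at most `∑_{i=0}^{k} (N choose i) (1-t)^i t^(N-i)`. -/
theorem scenario_discard_tail_bound
    {Ω : Type*} [MeasurableSpace Ω] (μ : Measure Ω) [IsProbabilityMeasure μ]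
    (sol : Ω → ℝ) (hsol : Measurable sol)
    (N : ℕ) (hN : 1 ≤ N) (k : ℕ) (hk : k ≤ N - 1)
    (t : ℝ) (ht : t ∈ Set.Icc (0 : ℝ) 1) :
    (Measure.pi (fun _ : Fin N => μ))
        {ω : Fin N → Ω |
          (μ {u : Ω | sol u ≤
            (((Finset.univ.val : Multiset (Fin N)).map
                (fun i : Fin N => sol (ω i))).sort (· ≤ ·)).getD (N - 1 - k) 0}).toReal
            < t}
      ≤ ENNReal.ofReal
          (∑ i ∈ Finset.range (k + 1),
            (N.choose i : ℝ) * (1 - t) ^ i * t ^ (N - i)) :=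
  scenario_discard_tail_bound_general μ sol hsol N k t ht
end

section
/- Let N ≥ 1 be an integer, β ∈ (0,1), and let 0 ≤ k₁ < k₂ ≤ N−1 be integers. If t₁, t₂ ∈ [0,1] satisfy Σ_{i=0}^{k₁} (N choose i)·(1−t₁)^i·t₁^{N−i} = (1−β)/N and Σ_{i=0}^{k₂} (N choose i)·(1−t₂)^i·t₂^{N−i} = (1−β)/N, then t₂ < t₁. (The lower bound t*(k) on the satisfaction probability strictly decreases as the number k of violating samples increases.) -/
/-!
`B_{N,k}(t)` is the probability that a binomial `Bin(N, 1 - t)` variable is at most `k`.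
Its derivative in `t` telescopes to the single positive term
`C(N,k) (N-k) (1-t)^k t^(N-1-k)`, so it is strictly increasing on `[0,1]`; for fixed
`t ∈ (0,1)` it is strictly increasing in `k`. Since `B_{N,k}(0) = 0` and `B_{N,k}(1) = 1`
while `0 < (1-β)/N < 1`, the root `t₂` lies in `(0,1)`, so
`B_{N,k₁}(t₂) < B_{N,k₂}(t₂) = B_{N,k₁}(t₁)`, and monotonicity in `t` gives `t₂ < t₁`.
-/

open Finset

noncomputable def binomialLowerTail (N k : ℕ) (t : ℝ) : ℝ :=
  ∑ i ∈ range (k + 1), (N.choose i : ℝ) * (1 - t) ^ i * t ^ (N - i)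

lemma hasDerivAt_binomialTerm (c : ℝ) (i m : ℕ) (t : ℝ) :
    HasDerivAt (fun t : ℝ => c * (1 - t) ^ i * t ^ m)
      (c * (m * t ^ (m - 1) * (1 - t) ^ i - i * (1 - t) ^ (i - 1) * t ^ m)) t := by
  have hfirst : HasDerivAt (fun t : ℝ => (1 - t) ^ i) (i * (1 - t) ^ (i - 1) * (0 - 1)) t :=
    ((hasDerivAt_const t 1).sub (hasDerivAt_id t)).pow i
  refine ((hfirst.const_mul c).mul (hasDerivAt_pow m t)).congr_deriv ?_
  ring

namespace binomialLowerTail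

lemma hasDerivAt {N k : ℕ} (hk : k < N) (t : ℝ) :
    HasDerivAt (binomialLowerTail N k)
      (N.choose k * (N - k : ℕ) * (1 - t) ^ k * t ^ (N - 1 - k)) t := by
  induction k with
  | zero =>
    convert hasDerivAt_binomialTerm (N.choose 0) 0 (N - 0) t using 1
    · ext t
      simp [binomialLowerTail]
    · simp
  | succ k ih =>
    have hsplit : binomialLowerTail N (k + 1) = fun t => binomialLowerTail N k t +
        N.choose (k + 1) * (1 - t) ^ (k + 1) * t ^ (N - (k + 1)) := by
      ext t
      exact sum_range_succ _ _
    rw [hsplit]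
    refine ((ih (by omega)).add
      (hasDerivAt_binomialTerm (N.choose (k + 1)) (k + 1) (N - (k + 1)) t)).congr_deriv ?_
    obtain ⟨n, rfl⟩ : ∃ n, N = k + 2 + n := ⟨N - (k + 2), by omega⟩
    -- `C(N,k+1) (k+1) = C(N,k) (N-k)` makes the lower-order terms cancel.
    have hchoose : ((k + 2 + n).choose (k + 1) : ℝ) * (k + 1 : ℕ)
        = (k + 2 + n).choose k * (n + 2 : ℕ) := by
      rw [← Nat.cast_mul, ← Nat.cast_mul, Nat.choose_succ_right_eq]
      congr 3
      omega
    rw [show k + 2 + n - (k + 1) = n + 1 by omega, show k + 2 + n - 1 - (k + 1) = n by omega,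
      show k + 2 + n - k = n + 2 by omega, show k + 2 + n - 1 - k = n + 1 by omega,
      Nat.add_sub_cancel, Nat.add_sub_cancel]
    push_cast at hchoose ⊢
    linear_combination (-(1 - t) ^ k * t ^ (n + 1)) * hchoose

lemma strictMonoOn {N k : ℕ} (hk : k < N) :
    StrictMonoOn (binomialLowerTail N k) (Set.Icc 0 1) := by
  refine strictMonoOn_of_deriv_pos (convex_Icc 0 1)
    (fun t _ => (hasDerivAt hk t).continuousAt.continuousWithinAt) fun t ht => ?_
  rw [interior_Icc] at ht
  have hchoose : (0 : ℝ) < N.choose k := Nat.cast_pos.mpr (Nat.choose_pos hk.le)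
  have hNk : (0 : ℝ) < (N - k : ℕ) := Nat.cast_pos.mpr (by omega)
  have hs : (0 : ℝ) < 1 - t := by linarith [ht.2]
  have ht₀ : (0 : ℝ) < t := ht.1
  rw [(hasDerivAt hk t).deriv]
  positivity

lemma lt_of_index_lt {N k₁ k₂ : ℕ} (hk : k₁ < k₂) (hk₂ : k₂ ≤ N) {t : ℝ}
    (ht : t ∈ Set.Ioo 0 1) :
    binomialLowerTail N k₁ t < binomialLowerTail N k₂ t := by
  have hs : (0 : ℝ) < 1 - t := by linarith [ht.2]
  have ht₀ : (0 : ℝ) < t := ht.1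
  refine sum_lt_sum_of_subset (range_subset_range.mpr (by omega)) (self_mem_range_succ k₂)
    (by simpa using hk) ?_ fun i _ _ => by positivity
  have hchoose : (0 : ℝ) < N.choose k₂ := Nat.cast_pos.mpr (Nat.choose_pos hk₂)
  positivity

lemma apply_zero {N k : ℕ} (hk : k < N) : binomialLowerTail N k 0 = 0 :=
  sum_eq_zero fun i hi => by
    rw [zero_pow (by simp at hi; omega), mul_zero]

lemma apply_one (N k : ℕ) : binomialLowerTail N k 1 = 1 := by
  rw [binomialLowerTail, sum_eq_single_of_mem 0 (by simp) fun i _ hi => by simp [zero_pow hi]]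
  simp

end binomialLowerTail

theorem tstar_antitone_in_k_general
    (N : ℕ) (β : ℝ) (hβ : β ∈ Set.Ioo (0 : ℝ) 1)
    (k₁ k₂ : ℕ) (hk₁ : k₁ < k₂) (hk₂ : k₂ ≤ N - 1)
    (t₁ t₂ : ℝ) (ht₁ : t₁ ∈ Set.Icc (0 : ℝ) 1) (ht₂ : t₂ ∈ Set.Icc (0 : ℝ) 1)
    (h₁ : ∑ i ∈ Finset.range (k₁ + 1),
      (N.choose i : ℝ) * (1 - t₁) ^ i * t₁ ^ (N - i) = (1 - β) / N)
    (h₂ : ∑ i ∈ Finset.range (k₂ + 1),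
      (N.choose i : ℝ) * (1 - t₂) ^ i * t₂ ^ (N - i) = (1 - β) / N) :
    t₂ < t₁ := by
  change binomialLowerTail N k₁ t₁ = _ at h₁
  change binomialLowerTail N k₂ t₂ = _ at h₂
  have hN : (1 : ℝ) < N := by exact_mod_cast (show 1 < N by omega)
  have hlevel_pos : 0 < (1 - β) / N := div_pos (by linarith [hβ.2]) (by linarith)
  have hlevel_lt_one : (1 - β) / N < 1 := (div_lt_one (by linarith)).mpr (by linarith [hβ.1])
  have ht₂_ne_zero : t₂ ≠ 0 := by
    rintro rfl
    rw [binomialLowerTail.apply_zero (by omega)] at h₂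
    linarith
  have ht₂_ne_one : t₂ ≠ 1 := by
    rintro rfl
    rw [binomialLowerTail.apply_one] at h₂
    linarith
  have hlt : binomialLowerTail N k₁ t₂ < binomialLowerTail N k₁ t₁ := by
    rw [h₁, ← h₂]
    exact binomialLowerTail.lt_of_index_lt hk₁ (by omega)
      ⟨lt_of_le_of_ne ht₂.1 (Ne.symm ht₂_ne_zero), lt_of_le_of_ne ht₂.2 ht₂_ne_one⟩
  exact ((binomialLowerTail.strictMonoOn (by omega)).lt_iff_lt ht₂ ht₁).mp hlt

/-- The lower bound `t*(k)` on the satisfaction probability strictly decreases as the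
number `k` of violating samples increases. -/
theorem tstar_antitone_in_k
    (N : ℕ) (hN : 1 ≤ N) (β : ℝ) (hβ : β ∈ Set.Ioo (0 : ℝ) 1)
    (k₁ k₂ : ℕ) (hk₁ : k₁ < k₂) (hk₂ : k₂ ≤ N - 1)
    (t₁ t₂ : ℝ) (ht₁ : t₁ ∈ Set.Icc (0 : ℝ) 1) (ht₂ : t₂ ∈ Set.Icc (0 : ℝ) 1)
    (h₁ : ∑ i ∈ Finset.range (k₁ + 1),
      (N.choose i : ℝ) * (1 - t₁) ^ i * t₁ ^ (N - i) = (1 - β) / N)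
    (h₂ : ∑ i ∈ Finset.range (k₂ + 1),
      (N.choose i : ℝ) * (1 - t₂) ^ i * t₂ ^ (N - i) = (1 - β) / N) :
    t₂ < t₁ :=
  tstar_antitone_in_k_general N β hβ k₁ k₂ hk₁ hk₂ t₁ t₂ ht₁ ht₂ h₁ h₂
end
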